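/- Every tree T with maximum degree Δ(T) ≥ 5 admits a locally irregular 2-edge coloring, i.e., χ'_irr(T) ≤ 2. -/

import Mathlib

open SimpleGraph

variable {V : Type*}

noncomputable def colorDeg (G : SimpleGraph V) (c : Sym2 V → ℕ) (i : ℕ) (x : V) : ℕ :=
  {y | G.Adj x y ∧ c s(x, y) = i}.ncard

def IsLocIrrColoring (G : SimpleGraph V) (c : Sym2 V → ℕ) : Prop :=
  ∀ x y, G.Adj x y → colorDeg G c (c s(x, y)) x ≠ colorDeg G c (c s(x, y)) y

def IsLIEC (G : SimpleGraph V) (k : ℕ) (c : Sym2 V → ℕ) : Prop :=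
  (∀ e ∈ G.edgeSet, c e < k) ∧ IsLocIrrColoring G c

def IrrColorable (G : SimpleGraph V) : Prop := ∃ k c, IsLIEC G k c

noncomputable def irrChromIndex (G : SimpleGraph V) : ℕ :=
  sInf {k | ∃ c, IsLIEC G k c}

def IsCactus (G : SimpleGraph V) : Prop :=
  ∀ ⦃a b : V⦄ (p : G.Walk a a) (q : G.Walk b b), p.IsCycle → q.IsCycle →
    (∃ e, e ∈ p.edges ∧ e ∈ q.edges) → ∀ e, e ∈ p.edges ↔ e ∈ q.edges

noncomputable def numCycles (G : SimpleGraph V) : ℕ :=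
  {s : Set (Sym2 V) | ∃ (w : V) (p : G.Walk w w), p.IsCycle ∧ {e | e ∈ p.edges} = s}.ncard

/-!
Root the tree at a vertex `v` of maximum degree. For a vertex `x` with `k` children, choosing the
set of children whose edge to `x` is coloured unlike the edge from `x` to its parent, say `t` of
them, fixes the two colour degrees of `x`: `t` and `ε + (k - t)`, with `ε = 0` only at the root.
The degree of a child `j` in the colour of the edge `x j` depends only on the choices made below
`j`, so the choices can be made from the leaves up, and each edge `x j` is irregular once that
degree differs from the degree of `x` in the same colour. A pigeonhole count over the pairs
`{t, k + ε - t}` shows that such a choice exists whenever `ε = 1` or `k ≥ 5`. The absolute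
colours are then read off from the root down.
-/

open Finset

theorem exists_admissible_card {k ε : ℕ} (hε : ε ≤ 1) (hk : ε = 1 ∨ 5 ≤ k) (A : ℕ → ℕ)
    (hA : ∀ S : Finset ℕ, ∑ m ∈ S, A m ≤ k) :
    ∃ t ≤ k, A t + t ≤ k ∧ A (ε + (k - t)) ≤ t ∧ (t = ε + (k - t) → A t = 0) := by
  by_contra! hfail
  set P := (k + ε) / 2
  set w : ℕ → ℕ := fun t => if 2 * t = k + ε then 1 else t + 1
  -- if every `t ≤ P` fails, the values `m t ∈ {t, k + ε - t}` are distinct and each is taken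
  -- at least `w t` times, which adds up to more than `k`
  set m : ℕ → ℕ := fun t => if t < A (ε + (k - t)) then ε + (k - t) else t
  have hm : ∀ t ∈ range (P + 1), w t ≤ A (m t) := by
    intro t ht
    have htP : t ≤ P := Nat.lt_succ_iff.mp (mem_range.mp ht)
    simp only [w, m]
    split_ifs <;> have := hfail t (by omega) <;> omega
  have hinj : Set.InjOn m (range (P + 1)) := by
    intro t ht t' ht' h
    simp only [coe_range, Set.mem_Iio] at ht ht'
    simp only [m] at h
    split_ifs at h <;> omega
  have hsum : ∑ t ∈ range (P + 1), w t ≤ k :=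
    calc ∑ t ∈ range (P + 1), w t ≤ ∑ t ∈ range (P + 1), A (m t) := sum_le_sum hm
      _ = ∑ n ∈ (range (P + 1)).image m, A n := (sum_image hinj).symm
      _ ≤ k := hA _
  have hlow : ∑ t ∈ range P, (t + 1) + w P ≤ k := by
    rwa [sum_range_succ, sum_congr rfl fun t ht => if_neg (by simp at ht; omega)] at hsum
  have hgauss : (∑ t ∈ range P, (t + 1)) * 2 = (P + 1) * P := by
    rw [← add_zero (∑ t ∈ range P, (t + 1)), ← sum_range_succ' (fun t => t),
      sum_range_id_mul_two, Nat.add_sub_cancel]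
  have hP : 2 * P ≤ k + ε ∧ k + ε ≤ 2 * P + 1 := by omega
  simp only [w] at hlow
  generalize ∑ t ∈ range P, (t + 1) = G at hlow hgauss
  clear_value P
  split_ifs at hlow with hmid <;> rcases hk with rfl | hk
  all_goals
    obtain hP3 | hP3 := Nat.lt_or_ge P 3
    · interval_cases P <;> omega
    · nlinarith

theorem exists_subset_forall_ne_card {ι : Type*} [DecidableEq ι] (J : Finset ι) (s : ι → ℕ)
    {ε : ℕ} (hε : ε ≤ 1) (hJ : ε = 1 ∨ 5 ≤ #J) :
    ∃ B ⊆ J, (∀ j ∈ B, s j ≠ #B) ∧ ∀ j ∈ J \ B, s j ≠ ε + #(J \ B) := by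
  obtain ⟨t, htJ, hY, hX, hmid⟩ := exists_admissible_card hε hJ (fun m => #{j ∈ J | s j = m})
    fun S => (sum_card_fiberwise_eq_card_filter J S s).trans_le (card_filter_le _ _)
  have hXY : {j ∈ J | s j = ε + (#J - t)} ⊆ {j ∈ J | s j ≠ t} := by
    intro j hj
    simp only [mem_filter] at hj ⊢
    refine ⟨hj.1, fun hjt => ?_⟩
    have : j ∈ ({j ∈ J | s j = t} : Finset ι) := mem_filter.mpr ⟨hj.1, hjt⟩
    rw [card_eq_zero.mp (hmid (hjt.symm.trans hj.2))] at this
    exact notMem_empty j this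
  have hYcard : #{j ∈ J | s j = t} + #{j ∈ J | s j ≠ t} = #J :=
    card_filter_add_card_filter_not _
  obtain ⟨B, hXB, hBY, hB⟩ := exists_subsuperset_card_eq hXY hX (by omega)
  have hBJ : B ⊆ J := hBY.trans (filter_subset _ _)
  refine ⟨B, hBJ, fun j hj => hB ▸ (mem_filter.mp (hBY hj)).2, fun j hj => ?_⟩
  rw [card_sdiff_of_subset hBJ, hB]
  rw [mem_sdiff] at hj
  exact fun hs => hj.2 (hXB (mem_filter.mpr ⟨hj.1, hs⟩))

theorem colorDeg_eq_card [Fintype V] (G : SimpleGraph V) [DecidableRel G.Adj]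
    (c : Sym2 V → ℕ) (i : ℕ) (x : V) :
    colorDeg G c i x = #{y ∈ G.neighborFinset x | c s(x, y) = i} := by
  rw [colorDeg, ← Set.ncard_coe_finset]
  congr 1
  ext y
  simp

namespace SimpleGraph

variable (T : SimpleGraph V) (v : V)

open scoped Classical in
noncomputable def parent (x : V) : V :=
  if h : ∃ y, T.Adj x y ∧ T.dist v y + 1 = T.dist v x then h.choose else x

noncomputable def children [Fintype V] [DecidableRel T.Adj] (x : V) : Finset V :=
  {j ∈ T.neighborFinset x | T.dist v x < T.dist v j}

variable {T v}

theorem IsTree.exists_adj_dist_add_one (hT : T.IsTree) {x : V} (hx : x ≠ v) :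
    ∃ y, T.Adj x y ∧ T.dist v y + 1 = T.dist v x := by
  obtain ⟨p, -, hp⟩ := hT.connected.exists_path_of_dist v x
  have hnil : ¬p.Nil := Walk.not_nil_of_ne hx.symm
  refine ⟨p.penultimate, (p.adj_penultimate hnil).symm, ?_⟩
  have := dist_le p.dropLast
  have := p.length_dropLast_add_one hnil
  rcases hT.dist_eq_dist_add_one_of_adj v (p.adj_penultimate hnil) with h | h <;> omega

theorem IsTree.eq_of_adj_of_dist_add_one (hT : T.IsTree) {x y y' : V} (hy : T.Adj x y)
    (hy' : T.Adj x y') (hd : T.dist v y + 1 = T.dist v x) (hd' : T.dist v y' + 1 = T.dist v x) :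
    y = y' := by
  classical
  obtain ⟨p, hp, -⟩ := hT.connected.exists_path_of_dist v x
  suffices ∀ z, T.Adj x z → T.dist v z + 1 = T.dist v x → z = p.penultimate from
    (this y hy hd).trans (this y' hy' hd').symm
  intro z hz hzd
  obtain ⟨q, hq, hqz⟩ := hT.connected.exists_path_of_dist v z
  have hxq : x ∉ q.support := fun hx => by
    have := dist_le (q.takeUntil x hx)
    have := q.length_takeUntil_le_length hx
    omega
  exact hT.isAcyclic.eq_penultimate_of_adj_end hp hz
    (hT.isAcyclic.mem_support_of_ne_mem_support_of_adj_of_isPath hp hq hz hxq)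

theorem IsTree.adj_parent_and_dist_parent_add_one (hT : T.IsTree) {x : V} (hx : x ≠ v) :
    T.Adj x (T.parent v x) ∧ T.dist v (T.parent v x) + 1 = T.dist v x := by
  have h := hT.exists_adj_dist_add_one hx
  rw [parent, dif_pos h]
  exact h.choose_spec

theorem IsTree.adj_parent (hT : T.IsTree) {x : V} (hx : x ≠ v) : T.Adj x (T.parent v x) :=
  (hT.adj_parent_and_dist_parent_add_one hx).1

theorem IsTree.dist_parent_add_one (hT : T.IsTree) {x : V} (hx : x ≠ v) :
    T.dist v (T.parent v x) + 1 = T.dist v x :=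
  (hT.adj_parent_and_dist_parent_add_one hx).2

theorem IsTree.exists_add_parent {M : Type*} [AddCommMonoid M] (hT : T.IsTree) (g : V → M) :
    ∃ f : V → M, ∀ y ≠ v, f y = f (T.parent v y) + g y := by
  refine ⟨fun y => ∑ i ∈ range (T.dist v y), g ((T.parent v)^[i] y), fun y hy => ?_⟩
  simp only [← hT.dist_parent_add_one hy, sum_range_succ', Function.iterate_succ_apply,
    Function.iterate_zero_apply]

section Children

variable [Fintype V] [DecidableRel T.Adj]

theorem mem_children {x j : V} : j ∈ T.children v x ↔ T.Adj x j ∧ T.dist v x < T.dist v j := by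
  simp [children]

theorem children_self : T.children v v = T.neighborFinset v :=
  filter_true_of_mem fun j hj => by
    rw [dist_self, dist_eq_one_iff_adj.mpr ((mem_neighborFinset _ _ _).mp hj)]
    exact one_pos

theorem IsTree.ne_and_parent_eq_of_mem_children (hT : T.IsTree) {x j : V}
    (hj : j ∈ T.children v x) : j ≠ v ∧ T.parent v j = x := by
  obtain ⟨hadj, hlt⟩ := mem_children.mp hj
  have hd : T.dist v x + 1 = T.dist v j := by
    rcases hT.dist_eq_dist_add_one_of_adj v hadj with h | h <;> omega
  have hjv : j ≠ v := by rintro rfl; simp at hd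
  exact ⟨hjv, hT.eq_of_adj_of_dist_add_one (hT.adj_parent hjv) hadj.symm
    (hT.dist_parent_add_one hjv) hd⟩

theorem IsTree.mem_children_or_mem_children (hT : T.IsTree) {x y : V} (h : T.Adj x y) :
    y ∈ T.children v x ∨ x ∈ T.children v y := by
  simp only [mem_children]
  rcases hT.dist_eq_dist_add_one_of_adj v h with h' | h'
  · exact .inr ⟨h.symm, by omega⟩
  · exact .inl ⟨h, by omega⟩

theorem IsTree.neighborFinset_eq_insert_parent [DecidableEq V] (hT : T.IsTree) {x : V}
    (hx : x ≠ v) :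
    T.neighborFinset x = insert (T.parent v x) (T.children v x) := by
  ext y
  rw [mem_neighborFinset, mem_insert]
  refine ⟨fun h => ?_, ?_⟩
  · rcases hT.mem_children_or_mem_children h with hy | hx'
    · exact .inr hy
    · exact .inl (hT.ne_and_parent_eq_of_mem_children hx').2.symm
  · rintro (rfl | hy)
    · exact hT.adj_parent hx
    · exact (mem_children.mp hy).1

theorem IsTree.parent_notMem_children (hT : T.IsTree) {x : V} (hx : x ≠ v) :
    T.parent v x ∉ T.children v x := fun h => by
  have := (mem_children.mp h).2
  have := hT.dist_parent_add_one hx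
  omega

end Children

variable (T v) in
/-- The junk value `0`, on pairs of vertices equally far from `v`, is never taken on an edge of a
tree. -/
noncomputable def farEndColoring (col : V → ZMod 2) : Sym2 V → ℕ :=
  Sym2.lift ⟨fun a b => if T.dist v a < T.dist v b then (col b).val
    else if T.dist v b < T.dist v a then (col a).val else 0,
    fun a b => by dsimp only; split_ifs <;> omega⟩

theorem farEndColoring_mk_of_lt (col : V → ZMod 2) {a b : V} (h : T.dist v a < T.dist v b) :
    T.farEndColoring v col s(a, b) = (col b).val :=
  if_pos h

theorem farEndColoring_mk_of_gt (col : V → ZMod 2) {a b : V} (h : T.dist v b < T.dist v a) :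
    T.farEndColoring v col s(a, b) = (col a).val := by
  rw [Sym2.eq_swap, farEndColoring_mk_of_lt col h]

theorem farEndColoring_lt_two (col : V → ZMod 2) (e : Sym2 V) : T.farEndColoring v col e < 2 := by
  induction e with
  | h a b =>
    simp only [farEndColoring, Sym2.lift_mk]
    split_ifs <;> first | exact ZMod.val_lt _ | omega

variable [Fintype V] [DecidableRel T.Adj] [DecidableEq V]

theorem IsTree.colorDeg_farEndColoring (hT : T.IsTree) (col : V → ZMod 2)
    (x : V) (a : ZMod 2) :
    colorDeg T (T.farEndColoring v col) a.val x =
      (if x ≠ v ∧ col x = a then 1 else 0) + #{j ∈ T.children v x | col j = a} := by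
  have hchildren : {j ∈ T.children v x | T.farEndColoring v col s(x, j) = a.val} =
      {j ∈ T.children v x | col j = a} :=
    filter_congr fun j hj => by
      rw [farEndColoring_mk_of_lt col (mem_children.mp hj).2, (ZMod.val_injective 2).eq_iff]
  rw [colorDeg_eq_card]
  by_cases hx : x = v
  · subst hx
    simp [← children_self, hchildren]
  · have hpx := hT.dist_parent_add_one hx
    rw [hT.neighborFinset_eq_insert_parent hx, filter_insert,
      farEndColoring_mk_of_gt col (by omega), hchildren]
    by_cases ha : col x = a
    · rw [if_pos (congrArg ZMod.val ha),
        card_insert_of_notMem fun h => hT.parent_notMem_children hx (mem_filter.mp h).1]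
      simp [hx, ha, add_comm]
    · rw [if_neg (mt (ZMod.val_injective 2 ·) ha)]
      simp [hx, ha]

section Flip

variable {col : V → ZMod 2} {x : V} {C : Finset V}
  (hcol : ∀ j ∈ T.children v x, col j = col x + if j ∈ C then 1 else 0)
include hcol

theorem IsTree.colorDeg_farEndColoring_self (hT : T.IsTree) :
    colorDeg T (T.farEndColoring v col) (col x).val x =
      (if x = v then 0 else 1) + #(T.children v x \ C) := by
  rw [hT.colorDeg_farEndColoring]
  congr 1
  · by_cases hx : x = v <;> simp [hx]
  · congr 1
    ext j
    simp +contextual [hcol j, mem_sdiff]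

theorem IsTree.colorDeg_farEndColoring_add_one (hT : T.IsTree) (hC : C ⊆ T.children v x) :
    colorDeg T (T.farEndColoring v col) (col x + 1).val x = #C := by
  rw [hT.colorDeg_farEndColoring, if_neg fun h => by simpa using h.2, zero_add]
  congr 1
  ext j
  rw [mem_filter]
  refine ⟨fun ⟨hj, hcj⟩ => by_contra fun hjC => ?_, fun hjC => ⟨hC hjC, ?_⟩⟩
  · simp [hcol j hj, hjC] at hcj
  · simp [hcol j (hC hjC), hjC]

end Flip

variable (T v) in
/-- `C` is an admissible value for `B x`, the set of children of `x` whose edge to `x` is coloured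
unlike the edge from `x` to its parent; `1 + #(children j \ B j)` is the degree of a child `j` in
the colour of the edge `x j`. -/
def IsFlipChoice (B : V → Finset V) (x : V) (C : Finset V) : Prop :=
  C ⊆ T.children v x ∧ (∀ j ∈ C, 1 + #(T.children v j \ B j) ≠ #C) ∧
    ∀ j ∈ T.children v x \ C,
      1 + #(T.children v j \ B j) ≠ (if x = v then 0 else 1) + #(T.children v x \ C)

theorem IsFlipChoice.congr {B B' : V → Finset V} {x : V} {C : Finset V}
    (h : ∀ j ∈ T.children v x, B' j = B j) (hC : T.IsFlipChoice v B x C) :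
    T.IsFlipChoice v B' x C := by
  obtain ⟨hsub, hin, hout⟩ := hC
  refine ⟨hsub, fun j hj => ?_, fun j hj => ?_⟩
  · rw [h j (hsub hj)]
    exact hin j hj
  · rw [h j (mem_sdiff.mp hj).1]
    exact hout j hj

theorem IsTree.isLocIrrColoring_farEndColoring (hT : T.IsTree)
    {B : V → Finset V} (hB : ∀ x, T.IsFlipChoice v B x (B x)) {col : V → ZMod 2}
    (hcol : ∀ j ≠ v, col j = col (T.parent v j) + if j ∈ B (T.parent v j) then 1 else 0) :
    IsLocIrrColoring T (T.farEndColoring v col) := by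
  have hchild (x : V) : ∀ j ∈ T.children v x, col j = col x + if j ∈ B x then 1 else 0 := by
    intro j hj
    obtain ⟨hjv, rfl⟩ := hT.ne_and_parent_eq_of_mem_children hj
    exact hcol j hjv
  have hedge : ∀ x, ∀ j ∈ T.children v x,
      colorDeg T (T.farEndColoring v col) (T.farEndColoring v col s(x, j)) x ≠
        colorDeg T (T.farEndColoring v col) (T.farEndColoring v col s(x, j)) j := by
    intro x j hj
    have hdeg := hT.colorDeg_farEndColoring_self (hchild j)
    rw [if_neg (hT.ne_and_parent_eq_of_mem_children hj).1] at hdeg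
    rw [farEndColoring_mk_of_lt col (mem_children.mp hj).2, hdeg]
    obtain ⟨hsub, hin, hout⟩ := hB x
    by_cases hjB : j ∈ B x
    · rw [hchild x j hj, if_pos hjB, hT.colorDeg_farEndColoring_add_one (hchild x) hsub]
      exact (hin j hjB).symm
    · rw [hchild x j hj, if_neg hjB, add_zero, hT.colorDeg_farEndColoring_self (hchild x)]
      exact (hout j (mem_sdiff.mpr ⟨hj, hjB⟩)).symm
  intro x y h
  rcases hT.mem_children_or_mem_children h with hy | hx
  · exact hedge x y hy
  · rw [Sym2.eq_swap]
    exact (hedge y x hx).symm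

theorem exists_isFlipChoice (hv : 5 ≤ T.degree v) (B : V → Finset V)
    (x : V) : ∃ C, T.IsFlipChoice v B x C := by
  refine exists_subset_forall_ne_card _ _ (by split_ifs <;> omega) ?_
  split_ifs with hx
  · subst hx
    exact .inr (children_self (T := T) ▸ hv)
  · exact .inl rfl

theorem IsTree.exists_forall_isFlipChoice (hT : T.IsTree) (hv : 5 ≤ T.degree v) :
    ∃ B : V → Finset V, ∀ x, T.IsFlipChoice v B x (B x) := by
  choose C hC using exists_isFlipChoice hv
  have hdist (x : V) : T.dist v x < Fintype.card V := by
    obtain ⟨p, hp, hpx⟩ := hT.connected.exists_path_of_dist v x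
    exact hpx ▸ hp.length_lt
  -- choose the flip sets level by level, from the deepest vertices up to the root
  suffices ∀ m, ∃ B : V → Finset V, ∀ x, Fintype.card V ≤ T.dist v x + m →
      T.IsFlipChoice v B x (B x) by
    obtain ⟨B, hB⟩ := this (Fintype.card V)
    exact ⟨B, fun x => hB x (by omega)⟩
  intro m
  induction m with
  | zero => exact ⟨fun _ => ∅, fun x hx => absurd hx (by simpa using hdist x)⟩
  | succ m ih =>
    obtain ⟨B, hB⟩ := ih
    let B' : V → Finset V := fun y =>
      if T.dist v y + m + 1 = Fintype.card V then C B y else B y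
    refine ⟨B', fun x hx => IsFlipChoice.congr (B := B) (fun j hj => ?_) ?_⟩
    · have := (mem_children.mp hj).2
      exact if_neg (by omega)
    · by_cases hlevel : T.dist v x + m + 1 = Fintype.card V
      · simpa only [B', if_pos hlevel] using hC B x
      · simpa only [B', if_neg hlevel] using hB x (by omega)

end SimpleGraph

theorem tree_maxDegree_ge_five_two_colors
    [Fintype V] (T : SimpleGraph V) [DecidableRel T.Adj]
    (hT : T.IsTree) (hdeg : 5 ≤ T.maxDegree) :
    (∃ c, IsLIEC T 2 c) ∧ irrChromIndex T ≤ 2 := by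
  classical
  have : Nonempty V := hT.connected.nonempty
  obtain ⟨v, hv⟩ := T.exists_maximal_degree_vertex
  obtain ⟨B, hB⟩ := hT.exists_forall_isFlipChoice (hv ▸ hdeg)
  obtain ⟨col, hcol⟩ := hT.exists_add_parent (v := v)
    fun j => if j ∈ B (T.parent v j) then (1 : ZMod 2) else 0
  have hc : IsLIEC T 2 (T.farEndColoring v col) :=
    ⟨fun e _ => farEndColoring_lt_two col e, hT.isLocIrrColoring_farEndColoring hB hcol⟩
  exact ⟨⟨_, hc⟩, Nat.sInf_le ⟨_, hc⟩⟩
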